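/- arXiv:2309.02412 — 4 statements merged into one kernel-verified Lean document; each statement's English description precedes it below -/
import Mathlib

section
/- Let x ∈ Q, z ∈ ℝⁿ, σ > 0, θ ≥ 0, and let x⁺ ∈ Q satisfy ‖∇M_{x,σ}(x⁺) + ψ'(x⁺)‖ ≤ θ‖x⁺ − x‖² for some subgradient ψ'(x⁺) ∈ ∂ψ(x⁺). Suppose the approximations satisfy ‖g − ∇f(x)‖ ≤ δ_g and ‖B − ∇²f(z)‖ ≤ δ_B for some δ_g, δ_B ≥ 0. Then, with r := ‖x⁺ − x‖, one has ‖∇f(x⁺) + ψ'(x⁺)‖ ≤ (θ + (σ + L)/2)·r² + (δ_B + L‖x − z‖)·r + δ_g. -/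
open RealInnerProductSpace

/-!
Write `d = x⁺ - x` and `H = ∇²f(z)`. Then `∇f(x⁺) + ψ'(x⁺)` is the model residual
`g + B d + (σ/2)‖d‖ d + ψ'(x⁺)` corrected by four terms: the Taylor remainder
`∇f(x⁺) - ∇f(x) - H d`, the gradient error `∇f(x) - g`, the Hessian error `(H - B) d` and the
cubic term. The Lipschitz Hessian bounds the remainder by `(L/2)‖d‖² + L‖x - z‖‖d‖`, and the
triangle inequality adds up the five bounds.
-/

theorem norm_image_sub_sub_fderiv_apply_le {E F : Type*} [NormedAddCommGroup E]
    [NormedSpace ℝ E] [NormedAddCommGroup F] [NormedSpace ℝ F]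
    {G : E → F} {G' : E → E →L[ℝ] F} {L : ℝ} (hL : 0 ≤ L) (hG : ∀ u, HasFDerivAt G (G' u) u)
    (hLip : ∀ u v, ‖G' v - G' u‖ ≤ L * ‖v - u‖) (x y z : E) :
    ‖G y - G x - G' z (y - x)‖ ≤ L / 2 * ‖y - x‖ ^ 2 + L * ‖x - z‖ * ‖y - x‖ := by
  set d := y - x
  set r := ‖d‖
  set c := ‖x - z‖
  set φ : ℝ → F := fun t => G (x + t • d) - G x - t • G' z d
  have hφ : ∀ t, HasDerivAt φ (G' (x + t • d) d - G' z d) t := by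
    intro t
    have hline : HasDerivAt (fun t : ℝ => x + t • d) d t := by
      simpa using ((hasDerivAt_id t).smul_const d).const_add x
    have h := (((hG _).comp_hasDerivAt t hline).sub_const (G x)).sub
      ((hasDerivAt_id t).smul_const (G' z d))
    rwa [one_smul] at h
  have hbound : ∀ t,
      HasDerivAt (fun t => L * r * (r / 2 * t ^ 2 + c * t)) (L * r * (r * t + c)) t := by
    intro t
    refine ((((hasDerivAt_pow 2 t).const_mul (r / 2)).add
      ((hasDerivAt_id t).const_mul c)).const_mul (L * r)).congr_deriv ?_
    simp only [Nat.cast_ofNat]; ring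
  have hderiv : ∀ t ∈ Set.Ico (0 : ℝ) 1, ‖G' (x + t • d) d - G' z d‖ ≤ L * r * (r * t + c) := by
    rintro t ⟨ht, -⟩
    have hdist : ‖x + t • d - z‖ ≤ r * t + c := by
      calc ‖x + t • d - z‖ = ‖t • d + (x - z)‖ := by congr 1; abel
        _ ≤ ‖t • d‖ + c := norm_add_le _ _
        _ = r * t + c := by rw [norm_smul, Real.norm_of_nonneg ht, mul_comm]
    calc ‖G' (x + t • d) d - G' z d‖ = ‖(G' (x + t • d) - G' z) d‖ := rfl
      _ ≤ ‖G' (x + t • d) - G' z‖ * r := ContinuousLinearMap.le_opNorm _ _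
      _ ≤ L * (r * t + c) * r := by gcongr; exact (hLip _ _).trans (by gcongr)
      _ = L * r * (r * t + c) := by ring
  -- Fencing: `φ 0 = 0` and `‖φ'‖` stays below the derivative of this quadratic on `[0, 1)`.
  have key := image_norm_le_of_norm_deriv_right_le_deriv_boundary
    (fun t _ => (hφ t).continuousAt.continuousWithinAt) (fun t _ => (hφ t).hasDerivWithinAt)
    (by simp [φ]) hbound hderiv (Set.right_mem_Icc.2 zero_le_one)
  calc ‖G y - G x - G' z d‖ = ‖φ 1‖ := by simp [φ, d]
    _ ≤ L * r * (r / 2 * 1 ^ 2 + c * 1) := key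
    _ = L / 2 * r ^ 2 + L * c * r := by ring

theorem ContDiff.differentiable_gradient {E : Type*} [NormedAddCommGroup E]
    [InnerProductSpace ℝ E] [CompleteSpace E] {f : E → ℝ} (hf : ContDiff ℝ 2 f) :
    Differentiable ℝ (gradient f) :=
  (InnerProductSpace.toDual ℝ E).symm.differentiable.comp
    ((hf.fderiv_right (m := 1) (by norm_num)).differentiable one_ne_zero)

theorem stmt_0_general {n : ℕ}
    (f : EuclideanSpace ℝ (Fin n) → ℝ)
    (L : ℝ) (hL : 0 ≤ L)
    (hf : ContDiff ℝ 2 f)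
    (hLip : ∀ u v : EuclideanSpace ℝ (Fin n),
      ‖fderiv ℝ (gradient f) v - fderiv ℝ (gradient f) u‖ ≤ L * ‖v - u‖)
    (x : EuclideanSpace ℝ (Fin n)) (z : EuclideanSpace ℝ (Fin n))
    (σ θ δg δB : ℝ) (hσ : 0 < σ)
    (g : EuclideanSpace ℝ (Fin n))
    (B : EuclideanSpace ℝ (Fin n) →L[ℝ] EuclideanSpace ℝ (Fin n))
    (xp : EuclideanSpace ℝ (Fin n))
    (ψp : EuclideanSpace ℝ (Fin n))
    (hmodel : ‖g + B (xp - x) + (σ / 2 * ‖xp - x‖) • (xp - x) + ψp‖ ≤ θ * ‖xp - x‖ ^ 2)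
    (hg : ‖g - gradient f x‖ ≤ δg)
    (hB : ‖B - fderiv ℝ (gradient f) z‖ ≤ δB) :
    ‖gradient f xp + ψp‖ ≤
      (θ + (σ + L) / 2) * ‖xp - x‖ ^ 2 + (δB + L * ‖x - z‖) * ‖xp - x‖ + δg := by
  set H := fderiv ℝ (gradient f)
  set d := xp - x
  have hTaylor : ‖gradient f xp - gradient f x - H z d‖ ≤ L / 2 * ‖d‖ ^ 2 + L * ‖x - z‖ * ‖d‖ :=
    norm_image_sub_sub_fderiv_apply_le hL (fun u => (hf.differentiable_gradient u).hasFDerivAt)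
      hLip x xp z
  have hHess : ‖(H z - B) d‖ ≤ δB * ‖d‖ :=
    (ContinuousLinearMap.le_opNorm _ _).trans (by rw [norm_sub_rev]; gcongr)
  have hcubic : ‖(σ / 2 * ‖d‖) • d‖ = σ / 2 * ‖d‖ ^ 2 := by
    rw [norm_smul, Real.norm_of_nonneg (by positivity)]; ring
  calc ‖gradient f xp + ψp‖
      = ‖(g + B d + (σ / 2 * ‖d‖) • d + ψp) + (gradient f xp - gradient f x - H z d)
          + (gradient f x - g) + (H z - B) d - (σ / 2 * ‖d‖) • d‖ := by
        congr 1; rw [sub_apply]; abel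
    _ ≤ ‖g + B d + (σ / 2 * ‖d‖) • d + ψp‖ + ‖gradient f xp - gradient f x - H z d‖
          + ‖gradient f x - g‖ + ‖(H z - B) d‖ + ‖(σ / 2 * ‖d‖) • d‖ :=
        (norm_sub_le _ _).trans (by gcongr; exact norm_add₄_le)
    _ ≤ θ * ‖d‖ ^ 2 + (L / 2 * ‖d‖ ^ 2 + L * ‖x - z‖ * ‖d‖) + δg + δB * ‖d‖
          + σ / 2 * ‖d‖ ^ 2 := by
        rw [hcubic]; gcongr; rwa [norm_sub_rev]
    _ = (θ + (σ + L) / 2) * ‖d‖ ^ 2 + (δB + L * ‖x - z‖) * ‖d‖ + δg := by ring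

/-- Lemma 1 of the paper: bound on the new (sub)gradient norm after one
inexact cubic-regularized Newton step with approximate gradient `g` and lazy Hessian
approximation `B`. -/
theorem stmt_0 {n : ℕ} (hn : 1 ≤ n)
    (f ψ : EuclideanSpace ℝ (Fin n) → ℝ) (Q : Set (EuclideanSpace ℝ (Fin n)))
    (L : ℝ) (hL : 0 ≤ L)
    (hf : ContDiff ℝ 2 f)
    (hLip : ∀ u v : EuclideanSpace ℝ (Fin n),
      ‖fderiv ℝ (gradient f) v - fderiv ℝ (gradient f) u‖ ≤ L * ‖v - u‖)
    (hQconv : Convex ℝ Q) (hψ : ConvexOn ℝ Q ψ)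
    (x : EuclideanSpace ℝ (Fin n)) (hx : x ∈ Q) (z : EuclideanSpace ℝ (Fin n))
    (σ θ δg δB : ℝ) (hσ : 0 < σ) (hθ : 0 ≤ θ) (hδg : 0 ≤ δg) (hδB : 0 ≤ δB)
    (g : EuclideanSpace ℝ (Fin n))
    (B : EuclideanSpace ℝ (Fin n) →L[ℝ] EuclideanSpace ℝ (Fin n))
    (hBsym : ∀ u v : EuclideanSpace ℝ (Fin n), ⟪B u, v⟫ = ⟪u, B v⟫)
    (xp : EuclideanSpace ℝ (Fin n)) (hxp : xp ∈ Q)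
    (ψp : EuclideanSpace ℝ (Fin n))
    (hψp : ∀ y : EuclideanSpace ℝ (Fin n), ψ xp + ⟪ψp, y - xp⟫ ≤ ψ y)
    (hmodel : ‖g + B (xp - x) + (σ / 2 * ‖xp - x‖) • (xp - x) + ψp‖ ≤ θ * ‖xp - x‖ ^ 2)
    (hg : ‖g - gradient f x‖ ≤ δg)
    (hB : ‖B - fderiv ℝ (gradient f) z‖ ≤ δB) :
    ‖gradient f xp + ψp‖ ≤
      (θ + (σ + L) / 2) * ‖xp - x‖ ^ 2 + (δB + L * ‖x - z‖) * ‖xp - x‖ + δg :=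
  stmt_0_general f L hL hf hLip x z σ θ δg δB hσ g B xp ψp hmodel hg hB
end

section
/- Suppose ψ is twice differentiable. Let x ∈ Q, z ∈ ℝⁿ, θ ≥ 0, and let x⁺ ∈ Q satisfy the matrix inequality B + θ‖x⁺ − x‖·I + ∇²ψ(x⁺) ⪰ 0, where I is the identity matrix. Suppose ‖B − ∇²f(z)‖ ≤ δ_B for some δ_B ≥ 0. Then, with r := ‖x⁺ − x‖, the Hessian of F = f + ψ satisfies ∇²F(x⁺) ⪰ −((L + θ)r + L‖x − z‖ + δ_B)·I; equivalently, ξ(x⁺) ≤ (L + θ)r + L‖x − z‖ + δ_B. -/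
/-!
Write `H = ∇²f`. The Lipschitz bound on `H` and the triangle inequality through `x` give
`‖H(x⁺) − B‖ ≤ L‖x⁺ − x‖ + L‖x − z‖ + δ_B`, so `H(x⁺) ⪰ B − (L r + L‖x − z‖ + δ_B) I`.
Adding `∇²ψ(x⁺)` and using `B + ∇²ψ(x⁺) ⪰ −θ r I` yields the bound on `∇²F(x⁺) = H(x⁺) + ∇²ψ(x⁺)`.
-/

open RealInnerProductSpace

open scoped Gradient

section Gradient

variable {F : Type*} [NormedAddCommGroup F] [InnerProductSpace ℝ F] [CompleteSpace F]

theorem gradient_fun_add {f g : F → ℝ} {x : F} (hf : DifferentiableAt ℝ f x)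
    (hg : DifferentiableAt ℝ g x) : ∇ (fun y => f y + g y) x = ∇ f x + ∇ g x := by
  simp only [gradient, fderiv_fun_add hf hg, map_add]

theorem ContDiff.differentiable_gradient_s2 {f : F → ℝ} (hf : ContDiff ℝ 2 f) :
    Differentiable ℝ (∇ f) :=
  (InnerProductSpace.toDual ℝ F).symm.differentiable.comp
    ((hf.fderiv_right (m := 1) le_rfl).differentiable one_ne_zero)

theorem fderiv_gradient_fun_add {f g : F → ℝ} (hf : ContDiff ℝ 2 f) (hg : ContDiff ℝ 2 g)
    (x : F) : fderiv ℝ (∇ fun y => f y + g y) x = fderiv ℝ (∇ f) x + fderiv ℝ (∇ g) x := by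
  have hsum : (∇ fun y => f y + g y) = fun y => ∇ f y + ∇ g y := funext fun y =>
    gradient_fun_add (hf.differentiable two_ne_zero y) (hg.differentiable two_ne_zero y)
  rw [hsum]
  exact fderiv_fun_add (hf.differentiable_gradient_s2 x) (hg.differentiable_gradient_s2 x)

end Gradient

namespace ContinuousLinearMap

variable {E : Type*} [NormedAddCommGroup E] [InnerProductSpace ℝ E]

theorem abs_real_inner_apply_self_le (A : E →L[ℝ] E) (v : E) : |⟪A v, v⟫| ≤ ‖A‖ * ‖v‖ ^ 2 :=
  calc |⟪A v, v⟫| ≤ ‖A v‖ * ‖v‖ := abs_real_inner_le_norm _ _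
    _ ≤ ‖A‖ * ‖v‖ * ‖v‖ := by gcongr; exact A.le_opNorm v
    _ = ‖A‖ * ‖v‖ ^ 2 := by ring

theorem real_inner_apply_self_ge (A B : E →L[ℝ] E) (v : E) :
    ⟪B v, v⟫ - ‖A - B‖ * ‖v‖ ^ 2 ≤ ⟪A v, v⟫ := by
  have h := (abs_le.mp ((A - B).abs_real_inner_apply_self_le v)).1
  rw [sub_apply, inner_sub_left] at h
  linarith

end ContinuousLinearMap

theorem norm_sub_le_of_forall_norm_sub_le_mul {X Y : Type*} [SeminormedAddCommGroup X]
    [SeminormedAddCommGroup Y] {H : X → Y} {L : ℝ} (hL : 0 ≤ L)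
    (hH : ∀ u v, ‖H v - H u‖ ≤ L * ‖v - u‖) (b : Y) (x y z : X) :
    ‖H y - b‖ ≤ L * ‖y - x‖ + L * ‖x - z‖ + ‖H z - b‖ :=
  calc ‖H y - b‖ ≤ ‖H y - H z‖ + ‖H z - b‖ := norm_sub_le_norm_sub_add_norm_sub _ _ _
    _ ≤ L * ‖y - z‖ + ‖H z - b‖ := by gcongr; exact hH z y
    _ ≤ L * (‖y - x‖ + ‖x - z‖) + ‖H z - b‖ := by
      gcongr; exact norm_sub_le_norm_sub_add_norm_sub _ _ _
    _ = L * ‖y - x‖ + L * ‖x - z‖ + ‖H z - b‖ := by ring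

theorem stmt_2_general {n : ℕ}
    (f ψ : EuclideanSpace ℝ (Fin n) → ℝ)
    (L : ℝ) (hL : 0 ≤ L)
    (hf : ContDiff ℝ 2 f)
    (hLip : ∀ u v : EuclideanSpace ℝ (Fin n),
      ‖fderiv ℝ (gradient f) v - fderiv ℝ (gradient f) u‖ ≤ L * ‖v - u‖)
    (hψ2 : ContDiff ℝ 2 ψ)
    (x : EuclideanSpace ℝ (Fin n)) (z : EuclideanSpace ℝ (Fin n))
    (θ δB : ℝ)
    (B : EuclideanSpace ℝ (Fin n) →L[ℝ] EuclideanSpace ℝ (Fin n))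
    (xp : EuclideanSpace ℝ (Fin n))
    (hPSD : ∀ v : EuclideanSpace ℝ (Fin n),
      0 ≤ ⟪B v, v⟫ + θ * ‖xp - x‖ * ‖v‖ ^ 2 + ⟪fderiv ℝ (gradient ψ) xp v, v⟫)
    (hB : ‖B - fderiv ℝ (gradient f) z‖ ≤ δB) :
    ∀ v : EuclideanSpace ℝ (Fin n),
      -((((L + θ) * ‖xp - x‖ + L * ‖x - z‖ + δB)) * ‖v‖ ^ 2) ≤
        ⟪fderiv ℝ (gradient (fun y => f y + ψ y)) xp v, v⟫ := by
  intro v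
  have hHB : ‖fderiv ℝ (∇ f) xp - B‖ ≤ L * ‖xp - x‖ + L * ‖x - z‖ + δB := by
    have := norm_sub_le_of_forall_norm_sub_le_mul hL hLip B x xp z
    rw [norm_sub_rev] at hB
    linarith
  have hHf := (fderiv ℝ (∇ f) xp).real_inner_apply_self_ge B v
  rw [fderiv_gradient_fun_add hf hψ2, add_apply, inner_add_left]
  nlinarith [mul_le_mul_of_nonneg_right hHB (sq_nonneg ‖v‖), hPSD v]

/-- Lemma 3 of the paper: lower bound on the Hessian of the composite
objective `F = f + ψ` at the new point, stated as `∇²F(x⁺) ⪰ −((L+θ)r + L‖x−z‖ + δ_B)·I`,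
i.e. `ξ(x⁺) ≤ (L+θ)r + L‖x−z‖ + δ_B`. -/
theorem stmt_2 {n : ℕ} (hn : 1 ≤ n)
    (f ψ : EuclideanSpace ℝ (Fin n) → ℝ) (Q : Set (EuclideanSpace ℝ (Fin n)))
    (L : ℝ) (hL : 0 ≤ L)
    (hf : ContDiff ℝ 2 f)
    (hLip : ∀ u v : EuclideanSpace ℝ (Fin n),
      ‖fderiv ℝ (gradient f) v - fderiv ℝ (gradient f) u‖ ≤ L * ‖v - u‖)
    (hψ2 : ContDiff ℝ 2 ψ) (hQconv : Convex ℝ Q) (hψconv : ConvexOn ℝ Q ψ)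
    (x : EuclideanSpace ℝ (Fin n)) (hx : x ∈ Q) (z : EuclideanSpace ℝ (Fin n))
    (θ δB : ℝ) (hθ : 0 ≤ θ) (hδB : 0 ≤ δB)
    (B : EuclideanSpace ℝ (Fin n) →L[ℝ] EuclideanSpace ℝ (Fin n))
    (hBsym : ∀ u v : EuclideanSpace ℝ (Fin n), ⟪B u, v⟫ = ⟪u, B v⟫)
    (xp : EuclideanSpace ℝ (Fin n)) (hxp : xp ∈ Q)
    (hPSD : ∀ v : EuclideanSpace ℝ (Fin n),
      0 ≤ ⟪B v, v⟫ + θ * ‖xp - x‖ * ‖v‖ ^ 2 + ⟪fderiv ℝ (gradient ψ) xp v, v⟫)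
    (hB : ‖B - fderiv ℝ (gradient f) z‖ ≤ δB) :
    ∀ v : EuclideanSpace ℝ (Fin n),
      -((((L + θ) * ‖xp - x‖ + L * ‖x - z‖ + δB)) * ‖v‖ ^ 2) ≤
        ⟪fderiv ℝ (gradient (fun y => f y + ψ y)) xp v, v⟫ :=
  stmt_2_general f ψ L hL hf hLip hψ2 x z θ δB B xp hPSD hB
end

section
/- Suppose the Hessian of f is L-Lipschitz. Given x̄ ∈ ℝⁿ and h > 0, let A be the n×n matrix whose i-th column is (∇f(x̄ + h·e_i) − ∇f(x̄))/h, for i = 1, …, n. Then the symmetrized matrix B = (A + Aᵀ)/2 satisfies ‖B − ∇²f(x̄)‖ ≤ (√n · L / 2)·h in the spectral norm. -/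
open RealInnerProductSpace Matrix

/-! The error `Aeⱼ - ∇²f(x̄)eⱼ` of each finite-difference column is a first-order Taylor remainder
of `∇f` in the direction `h eⱼ`, hence at most `L h / 2` because `∇²f` is `L`-Lipschitz; `n`
columns of norm at most `L h / 2` give an operator of norm at most `√n L h / 2`. Since `∇²f(x̄)` is
symmetric, `B - ∇²f(x̄)` is the real part `(T + T*) / 2` of `T = A - ∇²f(x̄)`, whose norm is at
most `‖T‖`. -/

section LipschitzDerivative

variable {E F : Type*} [NormedAddCommGroup E] [NormedSpace ℝ E] [NormedAddCommGroup F]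
  [NormedSpace ℝ F] {g : E → F} {g' : E → E →L[ℝ] F} {L : ℝ}

theorem norm_sub_sub_fderiv_le_of_lipschitz_fderiv (hg : ∀ y, HasFDerivAt g (g' y) y)
    (hLip : ∀ u v, ‖g' v - g' u‖ ≤ L * ‖v - u‖) (x w : E) :
    ‖g (x + w) - g x - g' x w‖ ≤ L / 2 * ‖w‖ ^ 2 := by
  have hline : ∀ t : ℝ, HasDerivAt (fun s : ℝ => g (x + s • w) - g x - s • g' x w)
      (g' (x + t • w) w - g' x w) t := by
    intro t
    have := (hg (x + t • w)).comp_hasDerivAt t (((hasDerivAt_id t).smul_const w).const_add x)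
    simpa using (this.sub_const (g x)).fun_sub ((hasDerivAt_id t).smul_const (g' x w))
  have hbound : ∀ t ∈ Set.Ico (0 : ℝ) 1, ‖g' (x + t • w) w - g' x w‖ ≤ L * ‖w‖ ^ 2 * t := by
    intro t ht
    calc ‖g' (x + t • w) w - g' x w‖ = ‖(g' (x + t • w) - g' x) w‖ := rfl
      _ ≤ ‖g' (x + t • w) - g' x‖ * ‖w‖ := ContinuousLinearMap.le_opNorm _ _
      _ ≤ L * ‖t • w‖ * ‖w‖ := by gcongr; simpa using hLip x (x + t • w)
      _ = L * ‖w‖ ^ 2 * t := by rw [norm_smul, Real.norm_of_nonneg ht.1]; ring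
  simpa using image_norm_le_of_norm_deriv_right_le_deriv_boundary
    (B := fun t => L / 2 * ‖w‖ ^ 2 * t ^ 2)
    (fun t _ => (hline t).continuousAt.continuousWithinAt) (fun t _ => (hline t).hasDerivWithinAt)
    (by simp) (fun t => ((hasDerivAt_pow 2 t).const_mul _).congr_deriv (by ring)) hbound
    (Set.right_mem_Icc.2 zero_le_one)

theorem norm_inv_smul_sub_sub_fderiv_le_of_lipschitz_fderiv (hg : ∀ y, HasFDerivAt g (g' y) y)
    (hLip : ∀ u v, ‖g' v - g' u‖ ≤ L * ‖v - u‖) (x v : E) {h : ℝ} (hh : h ≠ 0) :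
    ‖h⁻¹ • (g (x + h • v) - g x) - g' x v‖ ≤ L / 2 * |h| * ‖v‖ ^ 2 := by
  have hrem : h⁻¹ • (g (x + h • v) - g x) - g' x v =
      h⁻¹ • (g (x + h • v) - g x - g' x (h • v)) := by
    rw [map_smul, smul_sub _ (g (x + h • v) - g x), inv_smul_smul₀ hh]
  have habs : 0 < |h| := abs_pos.2 hh
  rw [hrem, norm_smul, norm_inv, Real.norm_eq_abs, inv_mul_le_iff₀ habs]
  calc _ ≤ L / 2 * ‖h • v‖ ^ 2 := norm_sub_sub_fderiv_le_of_lipschitz_fderiv hg hLip x (h • v)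
    _ = |h| * (L / 2 * |h| * ‖v‖ ^ 2) := by rw [norm_smul, Real.norm_eq_abs]; ring

end LipschitzDerivative

theorem EuclideanSpace.sum_norm_apply_le_sqrt_card_mul_norm {ι 𝕜 : Type*} [Fintype ι] [RCLike 𝕜]
    (x : EuclideanSpace 𝕜 ι) : ∑ j, ‖x j‖ ≤ √(Fintype.card ι) * ‖x‖ := by
  simpa [EuclideanSpace.norm_eq] using
    Real.sum_mul_le_sqrt_mul_sqrt Finset.univ (fun _ => 1) (fun j => ‖x j‖)

theorem ContinuousLinearMap.opNorm_le_sqrt_card_mul_of_norm_apply_single_le {ι 𝕜 F : Type*}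
    [Fintype ι] [DecidableEq ι] [RCLike 𝕜] [NormedAddCommGroup F] [NormedSpace 𝕜 F]
    (T : EuclideanSpace 𝕜 ι →L[𝕜] F) {c : ℝ} (hc : 0 ≤ c)
    (hT : ∀ j, ‖T (EuclideanSpace.single j 1)‖ ≤ c) : ‖T‖ ≤ √(Fintype.card ι) * c := by
  refine T.opNorm_le_bound (by positivity) fun x => ?_
  have hTx : T x = ∑ j, x j • T (EuclideanSpace.single j 1) := by
    conv_lhs => rw [← (EuclideanSpace.basisFun ι 𝕜).sum_repr x]
    simp
  calc ‖T x‖ ≤ ∑ j, ‖x j‖ * c := by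
        rw [hTx]
        refine norm_sum_le_of_le _ fun j _ => ?_
        rw [norm_smul]
        gcongr
        exact hT j
    _ = c * ∑ j, ‖x j‖ := by rw [Finset.mul_sum]; simp_rw [mul_comm]
    _ ≤ c * (√(Fintype.card ι) * ‖x‖) := by gcongr; exact x.sum_norm_apply_le_sqrt_card_mul_norm
    _ = √(Fintype.card ι) * c * ‖x‖ := by ring

theorem norm_inv_two_smul_add_star_le {E : Type*} [NormedAddCommGroup E] [StarAddMonoid E]
    [NormedStarGroup E] [NormedSpace ℝ E] (a : E) : ‖(2 : ℝ)⁻¹ • (a + star a)‖ ≤ ‖a‖ := by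
  calc ‖(2 : ℝ)⁻¹ • (a + star a)‖ ≤ 2⁻¹ * (‖a‖ + ‖star a‖) := by
        rw [norm_smul, Real.norm_of_nonneg (by norm_num)]
        gcongr
        exact norm_add_le _ _
    _ = ‖a‖ := by rw [norm_star]; ring

theorem Matrix.div_two_eq_inv_two_smul {n K : Type*} [Fintype n] [DecidableEq n] [Field K]
    [NeZero (2 : K)] (M : Matrix n n K) : M / 2 = (2 : K)⁻¹ • M := by
  have h2 : (2 : Matrix n n K) = (2 : K) • 1 := by rw [two_smul, one_add_one_eq_two]
  have h2inv : (2 : Matrix n n K)⁻¹ = (2 : K)⁻¹ • 1 := by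
    refine inv_eq_right_inv ?_
    rw [h2, smul_mul_smul_comm, mul_one, mul_inv_cancel₀ two_ne_zero, one_smul]
  rw [div_eq_mul_inv, h2inv, mul_smul_comm, mul_one]

theorem norm_toEuclideanCLM_div_two_add_transpose_sub_le {n : Type*} [Fintype n] [DecidableEq n]
    (A : Matrix n n ℝ) {H : EuclideanSpace ℝ n →L[ℝ] EuclideanSpace ℝ n} (hH : IsSelfAdjoint H) :
    ‖toEuclideanCLM (𝕜 := ℝ) ((A + Aᵀ) / 2) - H‖ ≤ ‖toEuclideanCLM (𝕜 := ℝ) A - H‖ := by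
  have hstar : star (toEuclideanCLM (𝕜 := ℝ) A - H) = star (toEuclideanCLM (𝕜 := ℝ) A) - H := by
    exact (star_sub _ H).trans (congrArg (star (toEuclideanCLM (𝕜 := ℝ) A) - ·) hH.star_eq)
  have hsymm : toEuclideanCLM (𝕜 := ℝ) ((A + Aᵀ) / 2) - H =
      (2 : ℝ)⁻¹ • (toEuclideanCLM (𝕜 := ℝ) A - H + star (toEuclideanCLM (𝕜 := ℝ) A - H)) := by
    rw [hstar, Matrix.div_two_eq_inv_two_smul, ← conjTranspose_eq_transpose_of_trivial,
      ← star_eq_conjTranspose, map_smul, map_add, map_star]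
    module
  rw [hsymm]
  exact norm_inv_two_smul_add_star_le (toEuclideanCLM (𝕜 := ℝ) A - H)

section Gradient

variable {E : Type*} [NormedAddCommGroup E] [InnerProductSpace ℝ E] [CompleteSpace E] {f : E → ℝ}

theorem gradient_eq_toDual_symm_comp_fderiv :
    gradient f = (InnerProductSpace.toDual ℝ E).symm ∘ fderiv ℝ f :=
  rfl

theorem ContDiff.gradient {m : WithTop ℕ∞} (hf : ContDiff ℝ (m + 1) f) :
    ContDiff ℝ m (gradient f) := by
  rw [gradient_eq_toDual_symm_comp_fderiv]
  exact (InnerProductSpace.toDual ℝ E).symm.contDiff.comp (hf.fderiv_right le_rfl)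

theorem ContDiffAt.isSelfAdjoint_fderiv_gradient {x : E} (hf : ContDiffAt ℝ 2 f x) :
    IsSelfAdjoint (fderiv ℝ (gradient f) x) := by
  have hinner : ∀ u v, ⟪fderiv ℝ (gradient f) x u, v⟫ = fderiv ℝ (fderiv ℝ f) x u v := by
    intro u v
    rw [gradient_eq_toDual_symm_comp_fderiv, LinearIsometryEquiv.comp_fderiv]
    exact InnerProductSpace.toDual_symm_apply
  rw [ContinuousLinearMap.isSelfAdjoint_iff_isSymmetric]
  intro u v
  simp only [ContinuousLinearMap.coe_coe]
  rw [hinner, real_inner_comm, hinner, hf.isSymmSndFDerivAt (by simp)]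

end Gradient

theorem stmt_5_general {n : ℕ}
    (f : EuclideanSpace ℝ (Fin n) → ℝ)
    (L : ℝ) (hL : 0 ≤ L)
    (hf : ContDiff ℝ 2 f)
    (hLip : ∀ u v : EuclideanSpace ℝ (Fin n),
      ‖fderiv ℝ (gradient f) v - fderiv ℝ (gradient f) u‖ ≤ L * ‖v - u‖)
    (xbar : EuclideanSpace ℝ (Fin n)) (h : ℝ) (hh : 0 < h)
    (A : Matrix (Fin n) (Fin n) ℝ)
    (hA : ∀ i j : Fin n, A i j =
      (gradient f (xbar + h • EuclideanSpace.single j 1) i - gradient f xbar i) / h)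
    (B : Matrix (Fin n) (Fin n) ℝ) (hBdef : B = (A + Aᵀ) / 2) :
    ‖Matrix.toEuclideanCLM (𝕜 := ℝ) B - fderiv ℝ (gradient f) xbar‖ ≤
      Real.sqrt n * L / 2 * h := by
  set H := fderiv ℝ (gradient f) xbar
  set T := toEuclideanCLM (𝕜 := ℝ) A - H
  have hgrad : ∀ y, HasFDerivAt (gradient f) (fderiv ℝ (gradient f) y) y := fun y =>
    ((hf.gradient (m := 1)).differentiable one_ne_zero y).hasFDerivAt
  have hcol : ∀ j, ‖T (EuclideanSpace.single j 1)‖ ≤ L * h / 2 := by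
    intro j
    have hTj : T (EuclideanSpace.single j 1) =
        h⁻¹ • (gradient f (xbar + h • EuclideanSpace.single j 1) - gradient f xbar) -
          H (EuclideanSpace.single j 1) := by
      ext i
      simp [T, hA, div_eq_inv_mul]
    calc ‖T (EuclideanSpace.single j 1)‖
        ≤ L / 2 * |h| * ‖EuclideanSpace.single j (1 : ℝ)‖ ^ 2 := by
          rw [hTj]
          exact norm_inv_smul_sub_sub_fderiv_le_of_lipschitz_fderiv hgrad hLip xbar _ hh.ne'
      _ = L * h / 2 := by simp [abs_of_pos hh]; ring
  calc ‖toEuclideanCLM (𝕜 := ℝ) B - H‖ ≤ ‖T‖ := by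
        rw [hBdef]
        exact norm_toEuclideanCLM_div_two_add_transpose_sub_le A
          hf.contDiffAt.isSelfAdjoint_fderiv_gradient
    _ ≤ √(Fintype.card (Fin n)) * (L * h / 2) :=
      T.opNorm_le_sqrt_card_mul_of_norm_apply_single_le (by positivity) hcol
    _ = √n * L / 2 * h := by rw [Fintype.card_fin]; ring

/-- Lemma 4 of the paper: spectral-norm error of the symmetrized
finite-difference-of-gradients approximation of the Hessian. -/
theorem stmt_5 {n : ℕ} (hn : 1 ≤ n)
    (f : EuclideanSpace ℝ (Fin n) → ℝ)
    (L : ℝ) (hL : 0 ≤ L)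
    (hf : ContDiff ℝ 2 f)
    (hLip : ∀ u v : EuclideanSpace ℝ (Fin n),
      ‖fderiv ℝ (gradient f) v - fderiv ℝ (gradient f) u‖ ≤ L * ‖v - u‖)
    (xbar : EuclideanSpace ℝ (Fin n)) (h : ℝ) (hh : 0 < h)
    (A : Matrix (Fin n) (Fin n) ℝ)
    (hA : ∀ i j : Fin n, A i j =
      (gradient f (xbar + h • EuclideanSpace.single j 1) i - gradient f xbar i) / h)
    (B : Matrix (Fin n) (Fin n) ℝ) (hBdef : B = (A + Aᵀ) / 2) :
    ‖Matrix.toEuclideanCLM (𝕜 := ℝ) B - fderiv ℝ (gradient f) xbar‖ ≤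
      Real.sqrt n * L / 2 * h :=
  stmt_5_general f L hL hf hLip xbar h hh A hA B hBdef
end

section
/- Let μ > 0, σ > 0, x ∈ Q, and let the symmetric matrix B satisfy B ⪰ (μ/2)·I. Let x⁺ ∈ Q satisfy ‖∇M_{x,σ}(x⁺) + ψ'(x⁺)‖ ≤ (σ/4)‖x⁺ − x‖² for some ψ'(x⁺) ∈ ∂ψ(x⁺), and suppose ‖g − ∇f(x)‖ ≤ δ_g for some δ_g ≥ 0. Then for every subgradient F'(x) = ∇f(x) + ψ'(x) with ψ'(x) ∈ ∂ψ(x), the step length satisfies ‖x⁺ − x‖ ≤ (2/μ)·(‖F'(x)‖ + δ_g). -/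
open RealInnerProductSpace

/-- Lemma 11 of the paper: bound on the length of one inexact cubic Newton
step when the Hessian approximation is positive definite, `B ⪰ (μ/2)·I`. -/
theorem stmt_14 {n : ℕ} (hn : 1 ≤ n)
    (f ψ : EuclideanSpace ℝ (Fin n) → ℝ) (Q : Set (EuclideanSpace ℝ (Fin n)))
    (hf : ContDiff ℝ 2 f)
    (hQconv : Convex ℝ Q) (hψconv : ConvexOn ℝ Q ψ)
    (μ σ δg : ℝ) (hμ : 0 < μ) (hσ : 0 < σ) (hδg : 0 ≤ δg)
    (x : EuclideanSpace ℝ (Fin n)) (hx : x ∈ Q)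
    (g : EuclideanSpace ℝ (Fin n))
    (B : EuclideanSpace ℝ (Fin n) →L[ℝ] EuclideanSpace ℝ (Fin n))
    (hBsym : ∀ u v : EuclideanSpace ℝ (Fin n), ⟪B u, v⟫ = ⟪u, B v⟫)
    (hBpd : ∀ v : EuclideanSpace ℝ (Fin n), μ / 2 * ‖v‖ ^ 2 ≤ ⟪B v, v⟫)
    (xp : EuclideanSpace ℝ (Fin n)) (hxp : xp ∈ Q)
    (ψp : EuclideanSpace ℝ (Fin n))
    (hψp : ∀ y : EuclideanSpace ℝ (Fin n), ψ xp + ⟪ψp, y - xp⟫ ≤ ψ y)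
    (hmodel : ‖g + B (xp - x) + (σ / 2 * ‖xp - x‖) • (xp - x) + ψp‖ ≤ σ / 4 * ‖xp - x‖ ^ 2)
    (hg : ‖g - gradient f x‖ ≤ δg) :
    ∀ ψx : EuclideanSpace ℝ (Fin n),
      (∀ y : EuclideanSpace ℝ (Fin n), ψ x + ⟪ψx, y - x⟫ ≤ ψ y) →
      ‖xp - x‖ ≤ 2 / μ * (‖gradient f x + ψx‖ + δg) := by
  intro ψx hψx
  set h : EuclideanSpace ℝ (Fin n) := xp - x with hh
  set r : ℝ := ‖h‖ with hr
  have hr0 : 0 ≤ r := norm_nonneg _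
  set v : EuclideanSpace ℝ (Fin n) := g + B h + (σ / 2 * r) • h + ψp with hv
  set N : ℝ := ‖gradient f x + ψx‖ with hN
  have hN0 : 0 ≤ N := norm_nonneg _
  -- monotonicity of subgradients
  have hmono : ⟪ψx, h⟫ ≤ ⟪ψp, h⟫ := by
    have h1 := hψp x
    have h2 := hψx xp
    have hx1 : x - xp = -h := by simp [hh]
    rw [hx1, inner_neg_right] at h1
    have : ⟪ψx, h⟫ - ⟪ψp, h⟫ ≤ 0 := by linarith
    linarith
  -- expand ⟪v, h⟫
  have hvh : ⟪v, h⟫ = ⟪g, h⟫ + ⟪B h, h⟫ + (σ / 2 * r) * r ^ 2 + ⟪ψp, h⟫ := by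
    rw [hv, inner_add_left, inner_add_left, inner_add_left, real_inner_smul_left,
      real_inner_self_eq_norm_sq]
  have hvb : ⟪v, h⟫ ≤ σ / 4 * r ^ 2 * r := by
    calc ⟪v, h⟫ ≤ ‖v‖ * ‖h‖ := real_inner_le_norm v h
    _ ≤ σ / 4 * r ^ 2 * r := mul_le_mul_of_nonneg_right hmodel hr0
  have hgb : -⟪g - gradient f x, h⟫ ≤ δg * r := by
    rw [← inner_neg_left]
    calc ⟪-(g - gradient f x), h⟫ ≤ ‖-(g - gradient f x)‖ * ‖h‖ := real_inner_le_norm _ _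
    _ = ‖g - gradient f x‖ * r := by rw [norm_neg]
    _ ≤ δg * r := mul_le_mul_of_nonneg_right hg hr0
  have hFb : -⟪gradient f x + ψx, h⟫ ≤ N * r := by
    rw [← inner_neg_left]
    calc ⟪-(gradient f x + ψx), h⟫ ≤ ‖-(gradient f x + ψx)‖ * ‖h‖ := real_inner_le_norm _ _
    _ = N * r := by rw [norm_neg]
  have hsplit : ⟪g, h⟫ = ⟪g - gradient f x, h⟫ + ⟪gradient f x + ψx, h⟫ - ⟪ψx, h⟫ := by
    rw [inner_sub_left, inner_add_left]; ring
  have hB := hBpd h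
  have key : μ / 2 * r ^ 2 + σ / 2 * r * r ^ 2 ≤ σ / 4 * r ^ 2 * r + δg * r + N * r := by
    linarith
  have hcube : 0 ≤ σ / 4 * r * r ^ 2 := by positivity
  have key2 : μ / 2 * r ^ 2 ≤ (δg + N) * r := by linarith
  rcases eq_or_lt_of_le hr0 with h0 | h0
  · rw [← h0]
    positivity
  · rw [div_mul_eq_mul_div, le_div_iff₀ hμ]
    nlinarith
end
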